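/- The number of words of length k over an alphabet of d letters equals the number of multisets of Lyndon words whose lengths sum to k; that is, there is a bijection between length-k words and weakly decreasing finite sequences of Lyndon words with total length k. -/

import Mathlib

/-- A nonempty word `w` over a linearly ordered alphabet is a Lyndon word if
for every factorization `w = p ++ q` into nonempty words, `w < q` in the
lexicographic order on words. -/
def IsLyndon {α : Type*} [LinearOrder α] (w : List α) : Prop :=
  w ≠ [] ∧ ∀ p q : List α, p ≠ [] → q ≠ [] → w = p ++ q → w < q

namespace CFL
open List

variable {α : Type*} [LinearOrder α]

theorem lt_iff_lex (a b : List α) : a < b ↔ List.Lex (· < ·) a b := Iff.rfl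

theorem lt_append_right (a : List α) {t : List α} (ht : t ≠ []) : a < a ++ t := by
  refine (lt_iff_lex a (a++t)).2 ?_
  induction a with
  | nil => cases t with
    | nil => exact absurd rfl ht
    | cons c t' => exact List.Lex.nil
  | cons x a' ih => exact List.Lex.cons ih

theorem lt_of_prefix_ne {a b : List α} (h : a <+: b) (hne : a ≠ b) : a < b := by
  obtain ⟨t, rfl⟩ := h
  apply lt_append_right
  rintro rfl
  exact hne (by simp)

theorem le_of_prefix {a b : List α} (h : a <+: b) : a ≤ b := by
  rcases eq_or_ne a b with rfl | hne
  · exact le_rfl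
  · exact le_of_lt (lt_of_prefix_ne h hne)

theorem append_lt_append_left {a b : List α} (x : List α) (h : a < b) :
    x ++ a < x ++ b :=
  (lt_iff_lex (x++a) (x++b)).2 (List.Lex.append_left _ ((lt_iff_lex a b).1 h) x)

theorem lt_append_of_lt_not_prefix {a b : List α} (h : a < b) (hp : ¬ a <+: b)
    (x y : List α) : a ++ x < b ++ y := by
  refine (lt_iff_lex (a++x) (b++y)).2 ?_
  replace h := (lt_iff_lex a b).1 h
  induction h with
  | nil => exact absurd (List.nil_prefix) hp
  | @cons a' l₁ l₂ h ih =>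
      exact List.Lex.cons (ih (fun hpre => hp (List.cons_prefix_cons.2 ⟨rfl, hpre⟩)))
  | rel h => exact List.Lex.rel h

theorem isLyndon_singleton (a : α) : IsLyndon [a] := by
  refine ⟨by simp, fun p q hp hq h => ?_⟩
  exfalso
  have hl := congrArg List.length h
  have hp' : 0 < p.length := List.length_pos_iff.2 hp
  have hq' : 0 < q.length := List.length_pos_iff.2 hq
  simp [List.length_append] at hl
  omega

theorem append_lt_right {u v : List α} (hv : IsLyndon v) (hu : u ≠ [])
    (huv : u < v) : u ++ v < v := by
  by_cases hp : u <+: v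
  · obtain ⟨t, rfl⟩ := hp
    have ht : t ≠ [] := by
      rintro rfl
      rw [List.append_nil] at huv
      exact absurd huv (lt_irrefl _)
    exact append_lt_append_left u (hv.2 u t hu ht rfl)
  · simpa using lt_append_of_lt_not_prefix huv hp v []

/-- split a factorization of `u ++ v` -/
theorem split_append {u v p q : List α} (h : u ++ v = p ++ q) :
    (∃ a, p = u ++ a ∧ v = a ++ q) ∨ (∃ c, c ≠ [] ∧ u = p ++ c ∧ q = c ++ v) := by
  by_cases hl : u.length ≤ p.length
  · left
    have hup : u <+: p :=
      List.prefix_of_prefix_length_le ⟨v, h⟩ (List.prefix_append p q) hl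
    obtain ⟨a, rfl⟩ := hup
    refine ⟨a, rfl, ?_⟩
    rw [List.append_assoc] at h
    exact List.append_cancel_left h
  · right
    have hpu : p <+: u :=
      List.prefix_of_prefix_length_le (List.prefix_append p q) ⟨v, h⟩ (by omega)
    obtain ⟨c, rfl⟩ := hpu
    have hc : c ≠ [] := by
      rintro rfl
      simp at hl
    refine ⟨c, hc, rfl, ?_⟩
    rw [List.append_assoc] at h
    exact (List.append_cancel_left h).symm

theorem isLyndon_append {u v : List α} (hu : IsLyndon u) (hv : IsLyndon v)
    (huv : u < v) : IsLyndon (u ++ v) := by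
  refine ⟨by simp [hu.1], fun p q hp hq h => ?_⟩
  rcases split_append h with ⟨a, hpa, hva⟩ | ⟨c, hc, huc, hqc⟩
  · rcases eq_or_ne a [] with rfl | ha
    · rw [List.nil_append] at hva
      subst hva
      exact append_lt_right hv hu.1 huv
    · exact lt_trans (append_lt_right hv hu.1 huv) (hv.2 a q ha hq hva)
  · have huc' : u < c := hu.2 p c hp hc huc
    have hlen : c.length < u.length := by
      have hl := congrArg List.length huc
      have hp' : 0 < p.length := List.length_pos_iff.2 hp
      simp [List.length_append] at hl
      omega
    have hnp : ¬ u <+: c := fun hpre => absurd hpre.length_le (by omega)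
    rw [hqc]
    exact lt_append_of_lt_not_prefix huc' hnp v v

theorem prefix_flatten {L : List (List α)} {r : List α} (h : r <+: L.flatten)
    (hr : r ≠ []) :
    ∃ (A : List (List α)) (s m' : List α),
      s ≠ [] ∧ s <+: m' ∧ m' ∈ L ∧ r = A.flatten ++ s := by
  induction L generalizing r with
  | nil => simp at h; exact absurd h hr
  | cons m L' ih =>
    rw [List.flatten_cons] at h
    by_cases hl : r.length ≤ m.length
    · have hrm : r <+: m :=
        List.prefix_of_prefix_length_le h (List.prefix_append m L'.flatten) hl
      exact ⟨[], r, m, hr, hrm, List.mem_cons_self, by simp⟩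
    · have hmr : m <+: r :=
        List.prefix_of_prefix_length_le (List.prefix_append m L'.flatten) h (by omega)
      obtain ⟨r', rfl⟩ := hmr
      have hr' : r' ≠ [] := by
        rintro rfl
        simp at hl
      have hr'p : r' <+: L'.flatten := (List.prefix_append_right_inj m).1 h
      obtain ⟨A', s, m', hs, hsm, hm', heq⟩ := ih hr'p hr'
      exact ⟨m :: A', s, m', hs, hsm, List.mem_cons_of_mem m hm',
        by rw [List.flatten_cons, List.append_assoc, ← heq]⟩

/-- in a weakly decreasing chain, the head bounds everything -/
theorem head_max {m : List α} {g : List (List α)}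
    (hc : List.Chain' (fun a b => b ≤ a) (m :: g)) : ∀ x ∈ g, x ≤ m := by
  haveI : IsTrans (List α) (fun a b : List α => b ≤ a) :=
    ⟨fun _ _ _ h1 h2 => le_trans h2 h1⟩
  have := List.isChain_iff_pairwise.1 hc
  exact fun x hx => (List.pairwise_cons.1 this).1 x hx

/-- no Lyndon prefix of a decreasing Lyndon factorization is longer than the head -/
theorem no_long_prefix {l m : List α} {g : List (List α)}
    (hl : IsLyndon l) (hLy : ∀ x ∈ m :: g, IsLyndon x)
    (hc : List.Chain' (fun a b => b ≤ a) (m :: g))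
    (hpre : l <+: (m :: g).flatten) (hlen : m.length < l.length) : False := by
  rw [List.flatten_cons] at hpre
  have hml : m <+: l :=
    List.prefix_of_prefix_length_le (List.prefix_append m g.flatten) hpre (by omega)
  obtain ⟨r, rfl⟩ := hml
  have hr : r ≠ [] := by rintro rfl; simp at hlen
  have hrp : r <+: g.flatten := (List.prefix_append_right_inj m).1 hpre
  obtain ⟨A, s, m', hs, hsm, hm', heq⟩ := prefix_flatten hrp hr
  have hm : m ≠ [] := (hLy m (List.mem_cons_self)).1
  have h1 : m ++ r < s := by
    refine hl.2 (m ++ A.flatten) s ?_ hs ?_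
    · simp [hm]
    · rw [heq, List.append_assoc]
  have h2 : s ≤ m' := le_of_prefix hsm
  have h3 : m' ≤ m := head_max hc m' hm'
  have h4 : m < m ++ r := lt_append_right m hr
  exact absurd (lt_trans (lt_of_lt_of_le h1 (le_trans h2 h3)) h4) (lt_irrefl _)

theorem factorization_unique :
    ∀ (f g : List (List α)), (∀ x ∈ f, IsLyndon x) → (∀ x ∈ g, IsLyndon x) →
      List.Chain' (fun a b => b ≤ a) f → List.Chain' (fun a b => b ≤ a) g →
      f.flatten = g.flatten → f = g := by
  intro f
  induction f with
  | nil =>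
    intro g _ hgL _ _ hj
    cases g with
    | nil => rfl
    | cons m g' =>
      exfalso
      simp only [List.flatten_nil, List.flatten_cons] at hj
      exact (hgL m (List.mem_cons_self)).1 (List.append_eq_nil_iff.1 hj.symm).1
  | cons l f' ih =>
    intro g hfL hgL hcf hcg hj
    cases g with
    | nil =>
      exfalso
      simp only [List.flatten_nil, List.flatten_cons] at hj
      exact (hfL l (List.mem_cons_self)).1 (List.append_eq_nil_iff.1 hj).1
    | cons m g' =>
      have hlm : l = m := by
        have hlpre : l <+: (m :: g').flatten := by
          rw [← hj, List.flatten_cons]; exact List.prefix_append l f'.flatten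
        have hmpre : m <+: (l :: f').flatten := by
          rw [hj, List.flatten_cons]; exact List.prefix_append m g'.flatten
        rcases lt_trichotomy l.length m.length with h | h | h
        · exact absurd (no_long_prefix (hgL m (List.mem_cons_self))
            (fun x hx => hfL x hx) hcf hmpre h) not_false
        · exact (List.prefix_of_prefix_length_le hlpre
            (by rw [List.flatten_cons]; exact List.prefix_append m g'.flatten)
            (le_of_eq h)).eq_of_length h
        · exact absurd (no_long_prefix (hfL l (List.mem_cons_self))
            hgL hcg hlpre h) not_false
      subst hlm
      have hj' : f'.flatten = g'.flatten := by
        simp only [List.flatten_cons] at hj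
        exact List.append_cancel_left hj
      have := ih g' (fun x hx => hfL x (List.mem_cons_of_mem l hx))
        (fun x hx => hgL x (List.mem_cons_of_mem l hx)) hcf.tail hcg.tail hj'
      rw [this]

theorem factorization_exists :
    ∀ (n : ℕ) (w : List α), w.length ≤ n →
      ∃ f : List (List α), (∀ x ∈ f, IsLyndon x) ∧
        List.Chain' (fun a b => b ≤ a) f ∧ f.flatten = w := by
  intro n
  induction n with
  | zero =>
    intro w hw
    have : w = [] := List.length_eq_zero_iff.1 (Nat.le_zero.1 hw)
    exact ⟨[], by simp, List.isChain_nil, by simp [this]⟩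
  | succ n ih =>
    intro w hw
    rcases w with _ | ⟨a, w0⟩
    · exact ⟨[], by simp, List.isChain_nil, by simp⟩
    classical
    set w := a :: w0 with hwdef
    set P : ℕ → Prop := fun i => 0 < i ∧ IsLyndon (w.take i) with hP
    have hP1 : P 1 := by
      constructor
      · omega
      · have : w.take 1 = [a] := by simp [hwdef]
        rw [this]
        exact isLyndon_singleton a
    have h1w : 1 ≤ w.length := by simp [hwdef]
    set N := Nat.findGreatest P w.length with hN
    have hN1 : 1 ≤ N := Nat.le_findGreatest h1w hP1
    have hPN : P N := Nat.findGreatest_spec h1w hP1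
    have hNw : N ≤ w.length := Nat.findGreatest_le w.length
    set l := w.take N with hldef
    set r := w.drop N with hrdef
    have hlr : l ++ r = w := List.take_append_drop N w
    have hlL : IsLyndon l := hPN.2
    have hllen : l.length = N := by
      rw [hldef, List.length_take]; omega
    have hrlen : r.length ≤ n := by
      rw [hrdef, List.length_drop]; omega
    obtain ⟨f0, hf0L, hf0c, hf0j⟩ := ih r hrlen
    rcases f0 with _ | ⟨m, rest⟩
    · refine ⟨[l], by simpa using hlL, List.isChain_singleton l, ?_⟩
      simp only [List.flatten_nil] at hf0j
      simp [← hf0j.symm ▸ hlr]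
    · have hmL : IsLyndon m := hf0L m (List.mem_cons_self)
      have hml : m ≤ l := by
        by_contra hcon
        push_neg at hcon
        have hlm : IsLyndon (l ++ m) := isLyndon_append hlL hmL hcon
        have hm : m ≠ [] := hmL.1
        have hmlen : 0 < m.length := List.length_pos_iff.2 hm
        have hpre : l ++ m <+: w := by
          rw [← hlr]
          refine ⟨rest.flatten, ?_⟩
          rw [List.append_assoc, ← hf0j, List.flatten_cons]
        have hlen2 : N + m.length ≤ w.length := by
          have := hpre.length_le
          rw [List.length_append, hllen] at this
          exact this
        have htake : w.take (N + m.length) = l ++ m := by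
          have := List.prefix_iff_eq_take.1 hpre
          rw [List.length_append, hllen] at this
          exact this.symm
        have : P (N + m.length) := ⟨by omega, htake ▸ hlm⟩
        exact Nat.findGreatest_is_greatest (by omega) hlen2 this
      refine ⟨l :: m :: rest, ?_, ?_, ?_⟩
      · intro x hx
        rcases List.mem_cons.1 hx with rfl | hx'
        · exact hlL
        · exact hf0L x hx'
      · exact List.isChain_cons_cons.2 ⟨hml, hf0c⟩
      · rw [List.flatten_cons, hf0j, hlr]

theorem chain_equiv (f : List (List α)) :
    List.Chain' (fun a b : List α => b = a ∨ b < a) f ↔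
      List.Chain' (fun a b : List α => b ≤ a) f := by
  constructor
  · exact fun h => h.imp (fun {a b} hab => hab.elim le_of_eq le_of_lt)
  · exact fun h => h.imp (fun {a b} hab => (lt_or_eq_of_le hab).symm)

end CFL

/-- length-k words over d letters are in bijection with weakly
decreasing finite sequences of Lyndon words of total length k (equivalently,
multisets of Lyndon words whose lengths sum to k). -/
theorem words_equiv_decreasing_lyndon (d k : ℕ) :
    Nonempty ({w : List (Fin d) // w.length = k} ≃
      {f : List (List (Fin d)) //
        (∀ x ∈ f, IsLyndon x) ∧ f.Chain' (fun a b => b = a ∨ b < a) ∧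
          (f.map List.length).sum = k}) := by
  have hF : Function.Bijective
      (fun f : {f : List (List (Fin d)) //
        (∀ x ∈ f, IsLyndon x) ∧ f.Chain' (fun a b => b = a ∨ b < a) ∧
          (f.map List.length).sum = k} =>
        (⟨f.1.flatten, by rw [List.length_flatten]; exact f.2.2.2⟩ :
          {w : List (Fin d) // w.length = k})) := by
    constructor
    · rintro ⟨f, hf1, hf2, hf3⟩ ⟨g, hg1, hg2, hg3⟩ h
      simp only [Subtype.mk.injEq] at h ⊢
      exact CFL.factorization_unique f g hf1 hg1
        ((CFL.chain_equiv f).1 hf2) ((CFL.chain_equiv g).1 hg2) h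
    · rintro ⟨w, hw⟩
      obtain ⟨f, hf1, hf2, hf3⟩ := CFL.factorization_exists w.length w le_rfl
      refine ⟨⟨f, hf1, (CFL.chain_equiv f).2 hf2, ?_⟩, ?_⟩
      · rw [← List.length_flatten, hf3, hw]
      · simp [hf3]
  exact ⟨(Equiv.ofBijective _ hF).symm⟩
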